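/- (Theorem 4: optimal contest with general prizes only.) Let n ≥ 2, μ ∈ [0,1], let F, G : [0,1] → [0,1] be continuously differentiable, strictly increasing, with F(0) = G(0) = 0, F(1) = G(1) = 1, and derivatives f, g. Set H = μF + (1−μ)G with derivative h, and f^H_{n−1,j}(y) = ((n−1)!/((j−1)!(n−1−j)!)) H(y)^{n−1−j} (1−H(y))^{j−1} h(y). For a prize vector w = (w_1, …, w_n) with w_1 ≥ … ≥ w_n ≥ 0 and Σ_j w_j ≤ 1, define α_w(v) = Σ_{j=1}^{n−1} (w_j − w_{j+1}) ∫_0^v y f^H_{n−1,j}(y) dy and J(w) = ∫_0^1 α_w(v) f(v) dv. Let k* ∈ argmax_{j ∈ {1,…,n−1}} (1/j) ∫_0^1 y (1−F(y)) f^H_{n−1,j}(y) dy. Then the prize vector w* with w*_j = 1/k* for j ≤ k* and w*_j = 0 for j > k* satisfies J(w*) ≥ J(w) for every feasible prize vector w. -/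

import Mathlib

open scoped Nat

/-- Density of the `j`-th highest order statistic out of `m` i.i.d. samples from `H`. -/
noncomputable def orderDensity (H h : ℝ → ℝ) (m j : ℕ) (y : ℝ) : ℝ :=
  ((m ! : ℝ) / (((j-1)! : ℝ) * ((m-j)! : ℝ))) * (H y)^(m-j) * (1 - H y)^(j-1) * h y

/-- Equilibrium strategy `α_w(v) = Σ_{j=1}^{n−1} (w_j − w_{j+1}) ∫_0^v y f^H_{n−1,j}(y) dy`. -/
noncomputable def eqStrategy (H h : ℝ → ℝ) (n : ℕ) (w : ℕ → ℝ) (v : ℝ) : ℝ :=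
  ∑ j ∈ Finset.Icc 1 (n-1), (w j - w (j+1)) * ∫ y in (0:ℝ)..v, y * orderDensity H h (n-1) j y

/-- Designer objective: expected equilibrium output of a target-group agent,
`J(w) = ∫_0^1 α_w(v) f(v) dv`. -/
noncomputable def designerObj (H h f : ℝ → ℝ) (n : ℕ) (w : ℕ → ℝ) : ℝ :=
  ∫ v in (0:ℝ)..1, eqStrategy H h n w v * f v

/-!
The objective is linear in the prize differences `d j = w j - w (j+1) ≥ 0`: integrating by parts,
`∫₀¹ (∫₀ᵛ φ) f(v) dv = ∫₀¹ φ (1 - F)`, so `J(w) = ∑ⱼ d j * B j` with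
`B j = ∫₀¹ y (1 - F y) f^H_{n-1,j}(y) dy`. By the choice of `k*`, `B j ≤ j * (B k* / k*)`, and by
Abel summation `∑ⱼ j * d j = ∑ⱼ w j - n * w n ≤ 1`. Since `B k* ≥ 0`, this gives
`J(w) ≤ B k* / k* = J(w*)`.
-/

open Set

section Calculus

variable {a b : ℝ}

theorem hasDerivWithinAt_integral_Icc {Φ : ℝ → ℝ} (hΦ : ContinuousOn Φ (Icc a b)) {y : ℝ}
    (hy : y ∈ Icc a b) :
    HasDerivWithinAt (fun u => ∫ x in a..u, Φ x) (Φ y) (Icc a b) y := by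
  have := Fact.mk hy
  exact intervalIntegral.integral_hasDerivWithinAt_right
    ((hΦ.mono (Icc_subset_Icc le_rfl hy.2)).intervalIntegrable_of_Icc hy.1)
    (hΦ.stronglyMeasurableAtFilter_nhdsWithin measurableSet_Icc y) (hΦ y hy)

theorem continuousOn_integral_Icc {Φ : ℝ → ℝ} (hΦ : ContinuousOn Φ (Icc a b)) :
    ContinuousOn (fun u => ∫ x in a..u, Φ x) (Icc a b) :=
  fun _ hy => (hasDerivWithinAt_integral_Icc hΦ hy).continuousWithinAt

theorem integral_integral_mul_eq_integral_mul_sub {Φ F f : ℝ → ℝ} (hab : a ≤ b)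
    (hΦ : ContinuousOn Φ (Icc a b))
    (hF : ∀ x ∈ Icc a b, HasDerivWithinAt F (f x) (Icc a b) x) (hf : ContinuousOn f (Icc a b)) :
    ∫ v in a..b, (∫ y in a..v, Φ y) * f v = ∫ y in a..b, Φ y * (F b - F y) := by
  have hFc : ContinuousOn F (Icc a b) := fun x hx => (hF x hx).continuousWithinAt
  have hA : ∀ x ∈ uIcc a b, HasDerivWithinAt (fun u => ∫ y in a..u, Φ y) (Φ x) (uIcc a b) x := by
    rw [uIcc_of_le hab]
    exact fun x hx => hasDerivWithinAt_integral_Icc hΦ hx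
  rw [← uIcc_of_le hab] at hΦ hF hf hFc
  rw [intervalIntegral.integral_mul_deriv_eq_deriv_mul_of_hasDerivWithinAt hA hF
      hΦ.intervalIntegrable hf.intervalIntegrable,
    intervalIntegral.integral_same, zero_mul, sub_zero, ← intervalIntegral.integral_mul_const]
  simp only [mul_sub]
  exact (intervalIntegral.integral_sub (hΦ.mul continuousOn_const).intervalIntegrable
    (hΦ.mul hFc).intervalIntegrable).symm

theorem HasDerivWithinAt.nonneg_of_monotoneOn_Icc {F : ℝ → ℝ} {x d : ℝ} (hab : a < b)
    (hx : x ∈ Icc a b) (hF : HasDerivWithinAt F d (Icc a b) x)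
    (hmono : MonotoneOn F (Icc a b)) : 0 ≤ d :=
  hF.nonneg_of_monotoneOn (uniqueDiffWithinAt_iff_accPt.mp (uniqueDiffOn_Icc hab x hx)) hmono

end Calculus

theorem orderDensity_nonneg {H h : ℝ → ℝ} {y : ℝ} (hH : H y ∈ Icc 0 1) (hh : 0 ≤ h y)
    (m j : ℕ) : 0 ≤ orderDensity H h m j y := by
  have h1 : 0 ≤ 1 - H y := sub_nonneg.2 hH.2
  have h2 := hH.1
  unfold orderDensity
  positivity

theorem continuousOn_orderDensity {H h : ℝ → ℝ} {s : Set ℝ} (hH : ContinuousOn H s)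
    (hh : ContinuousOn h s) (m j : ℕ) : ContinuousOn (orderDensity H h m j) s := by
  unfold orderDensity
  fun_prop

theorem designerObj_eq_sum {H h F f : ℝ → ℝ} (hH : ContinuousOn H (Icc 0 1))
    (hh : ContinuousOn h (Icc 0 1))
    (hF : ∀ v ∈ Icc (0:ℝ) 1, HasDerivWithinAt F (f v) (Icc 0 1) v)
    (hf : ContinuousOn f (Icc 0 1)) (hF1 : F 1 = 1) (n : ℕ) (w : ℕ → ℝ) :
    designerObj H h f n w = ∑ j ∈ Finset.Icc 1 (n-1),
      (w j - w (j+1)) * ∫ y in (0:ℝ)..1, y * (1 - F y) * orderDensity H h (n-1) j y := by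
  have hΦ (j : ℕ) : ContinuousOn (fun y => y * orderDensity H h (n-1) j y) (Icc 0 1) :=
    continuousOn_id.mul (continuousOn_orderDensity hH hh _ _)
  unfold designerObj eqStrategy
  conv_lhs => simp only [Finset.sum_mul, mul_assoc]
  refine (intervalIntegral.integral_finsetSum fun j _ => ?_).trans
    (Finset.sum_congr rfl fun j _ => ?_)
  · exact (((continuousOn_integral_Icc (hΦ j)).mul hf).intervalIntegrable_of_Icc
      zero_le_one).const_mul _
  rw [intervalIntegral.integral_const_mul,
    integral_integral_mul_eq_integral_mul_sub zero_le_one (hΦ j) hF hf, hF1]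
  congr 1
  exact intervalIntegral.integral_congr fun y _ => by ring

theorem integral_mul_one_sub_mul_orderDensity_nonneg {F H h : ℝ → ℝ}
    (hF : MapsTo F (Icc 0 1) (Icc 0 1)) (hH : MapsTo H (Icc 0 1) (Icc 0 1))
    (hh : ∀ y ∈ Icc (0:ℝ) 1, 0 ≤ h y) (m j : ℕ) :
    0 ≤ ∫ y in (0:ℝ)..1, y * (1 - F y) * orderDensity H h m j y :=
  intervalIntegral.integral_nonneg zero_le_one fun y hy =>
    mul_nonneg (mul_nonneg hy.1 (sub_nonneg.2 (hF hy).2)) (orderDensity_nonneg (hH hy) (hh y hy) m j)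

section PrizeVector

variable {w : ℕ → ℝ} {m : ℕ}

theorem sum_Icc_natCast_mul_sub_succ :
    ∑ j ∈ Finset.Icc 1 m, (j:ℝ) * (w j - w (j+1))
      = ∑ j ∈ Finset.Icc 1 (m+1), w j - (m+1) * w (m+1) := by
  induction m with
  | zero => simp
  | succ m ih =>
    rw [Finset.sum_Icc_succ_top (by omega), ih,
      Finset.sum_Icc_succ_top (show 1 ≤ m + 1 + 1 by omega)]
    push_cast
    ring

theorem sum_Icc_natCast_mul_sub_succ_le_one (hw0 : 0 ≤ w (m+1))
    (hsum : ∑ j ∈ Finset.Icc 1 (m+1), w j ≤ 1) :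
    ∑ j ∈ Finset.Icc 1 m, (j:ℝ) * (w j - w (j+1)) ≤ 1 := by
  rw [sum_Icc_natCast_mul_sub_succ]
  nlinarith [mul_nonneg (m.cast_nonneg : (0:ℝ) ≤ m) hw0]

theorem sum_sub_succ_mul_le_of_forall_div_le {B : ℕ → ℝ} {k : ℕ}
    (hB : ∀ j ∈ Finset.Icc 1 m, 1/(j:ℝ) * B j ≤ 1/(k:ℝ) * B k) (hBk : 0 ≤ B k)
    (hw : ∀ j ∈ Finset.Icc 1 m, w (j+1) ≤ w j) (hw0 : 0 ≤ w (m+1))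
    (hsum : ∑ j ∈ Finset.Icc 1 (m+1), w j ≤ 1) :
    ∑ j ∈ Finset.Icc 1 m, (w j - w (j+1)) * B j ≤ (k:ℝ)⁻¹ * B k := by
  have hB' : ∀ j ∈ Finset.Icc 1 m, B j ≤ j * ((k:ℝ)⁻¹ * B k) := fun j hj => by
    have hj0 : (0:ℝ) < j := by exact_mod_cast (Finset.mem_Icc.1 hj).1
    simpa only [one_div, inv_mul_le_iff₀ hj0] using hB j hj
  calc ∑ j ∈ Finset.Icc 1 m, (w j - w (j+1)) * B j
      ≤ ∑ j ∈ Finset.Icc 1 m, (j:ℝ) * (w j - w (j+1)) * ((k:ℝ)⁻¹ * B k) :=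
        Finset.sum_le_sum fun j hj => by
          rw [mul_comm (j:ℝ), mul_assoc]
          exact mul_le_mul_of_nonneg_left (hB' j hj) (sub_nonneg.2 (hw j hj))
    _ = (∑ j ∈ Finset.Icc 1 m, (j:ℝ) * (w j - w (j+1))) * ((k:ℝ)⁻¹ * B k) :=
        (Finset.sum_mul ..).symm
    _ ≤ 1 * ((k:ℝ)⁻¹ * B k) :=
        mul_le_mul_of_nonneg_right (sum_Icc_natCast_mul_sub_succ_le_one hw0 hsum)
          (by positivity)
    _ = (k:ℝ)⁻¹ * B k := one_mul _

theorem sum_sub_succ_mul_topPrizes {k : ℕ} (hk : k ∈ Finset.Icc 1 m) (B : ℕ → ℝ) :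
    ∑ j ∈ Finset.Icc 1 m, ((if j ≤ k then (k:ℝ)⁻¹ else 0) - (if j + 1 ≤ k then (k:ℝ)⁻¹ else 0))
      * B j = (k:ℝ)⁻¹ * B k := by
  rw [Finset.sum_eq_single_of_mem k hk fun j _ hjk => by split_ifs <;> first | omega | ring]
  simp

end PrizeVector

theorem optimal_general_contest_general (n : ℕ)
    (μ : ℝ) (hμ : μ ∈ Set.Icc (0:ℝ) 1) (F f G g : ℝ → ℝ)
    (hFmono : StrictMonoOn F (Set.Icc (0:ℝ) 1))
    (hF0 : F 0 = 0) (hF1 : F 1 = 1)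
    (hFderiv : ∀ v ∈ Set.Icc (0:ℝ) 1, HasDerivWithinAt F (f v) (Set.Icc (0:ℝ) 1) v)
    (hfcont : ContinuousOn f (Set.Icc (0:ℝ) 1))
    (hGmono : StrictMonoOn G (Set.Icc (0:ℝ) 1))
    (hG0 : G 0 = 0) (hG1 : G 1 = 1)
    (hGderiv : ∀ v ∈ Set.Icc (0:ℝ) 1, HasDerivWithinAt G (g v) (Set.Icc (0:ℝ) 1) v)
    (hgcont : ContinuousOn g (Set.Icc (0:ℝ) 1))
    (kstar : ℕ) (hk1 : 1 ≤ kstar) (hkn : kstar ≤ n - 1)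
    (hargmax : ∀ j ∈ Finset.Icc 1 (n-1),
      (1/(j:ℝ)) * ∫ y in (0:ℝ)..1, y * (1 - F y) *
          orderDensity (fun x => μ * F x + (1-μ) * G x)
            (fun x => μ * f x + (1-μ) * g x) (n-1) j y
        ≤ (1/(kstar:ℝ)) * ∫ y in (0:ℝ)..1, y * (1 - F y) *
          orderDensity (fun x => μ * F x + (1-μ) * G x)
            (fun x => μ * f x + (1-μ) * g x) (n-1) kstar y) :
    ∀ w : ℕ → ℝ,
      (∀ j, 1 ≤ j → j < n → w (j+1) ≤ w j) → 0 ≤ w n →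
      (∑ j ∈ Finset.Icc 1 n, w j) ≤ 1 →
      designerObj (fun x => μ * F x + (1-μ) * G x) (fun x => μ * f x + (1-μ) * g x) f n w
        ≤ designerObj (fun x => μ * F x + (1-μ) * G x) (fun x => μ * f x + (1-μ) * g x) f n
            (fun j => if j ≤ kstar then (kstar : ℝ)⁻¹ else 0) := by
  intro w hwmono hwn hwsum
  have hFc : ContinuousOn F (Icc 0 1) := fun v hv => (hFderiv v hv).continuousWithinAt
  have hGc : ContinuousOn G (Icc 0 1) := fun v hv => (hGderiv v hv).continuousWithinAt
  have hFI : MapsTo F (Icc 0 1) (Icc 0 1) := by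
    simpa only [hF0, hF1] using hFmono.monotoneOn.mapsTo_Icc
  have hGI : MapsTo G (Icc 0 1) (Icc 0 1) := by
    simpa only [hG0, hG1] using hGmono.monotoneOn.mapsTo_Icc
  have hHI : MapsTo (fun x => μ * F x + (1-μ) * G x) (Icc 0 1) (Icc 0 1) := fun y hy =>
    convex_Icc (0:ℝ) 1 (hFI hy) (hGI hy) hμ.1 (sub_nonneg.2 hμ.2) (by ring)
  have hh (y) (hy : y ∈ Icc (0:ℝ) 1) : 0 ≤ μ * f y + (1-μ) * g y :=
    add_nonneg (mul_nonneg hμ.1 ((hFderiv y hy).nonneg_of_monotoneOn_Icc zero_lt_one hy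
      hFmono.monotoneOn)) (mul_nonneg (sub_nonneg.2 hμ.2)
      ((hGderiv y hy).nonneg_of_monotoneOn_Icc zero_lt_one hy hGmono.monotoneOn))
  rw [designerObj_eq_sum (by fun_prop) (by fun_prop) hFderiv hfcont hF1,
    designerObj_eq_sum (by fun_prop) (by fun_prop) hFderiv hfcont hF1,
    sum_sub_succ_mul_topPrizes (Finset.mem_Icc.2 ⟨hk1, hkn⟩)]
  obtain ⟨m, rfl⟩ : ∃ m, n = m + 1 := ⟨n - 1, by omega⟩
  simp only [Nat.add_sub_cancel] at hargmax ⊢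
  exact sum_sub_succ_mul_le_of_forall_div_le hargmax
    (integral_mul_one_sub_mul_orderDensity_nonneg hFI hHI hh _ _)
    (fun j hj => hwmono j (Finset.mem_Icc.1 hj).1 (Nat.lt_succ_of_le (Finset.mem_Icc.1 hj).2))
    hwn hwsum

/-- Theorem 4: in a contest with general prizes only, with population ability
distribution `H = μF + (1−μ)G`, if `k* ∈ argmax_{1 ≤ j ≤ n−1} (1/j)∫_0^1 y(1−F(y)) f^H_{n−1,j}(y) dy`,
then the prize vector awarding `1/k*` to the top `k*` ranks maximizes the expected
target-group output over all feasible prize vectors `w_1 ≥ … ≥ w_n ≥ 0`, `Σ_j w_j ≤ 1`. -/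
theorem optimal_general_contest (n : ℕ) (hn : 2 ≤ n)
    (μ : ℝ) (hμ : μ ∈ Set.Icc (0:ℝ) 1) (F f G g : ℝ → ℝ)
    (hFmono : StrictMonoOn F (Set.Icc (0:ℝ) 1))
    (hF0 : F 0 = 0) (hF1 : F 1 = 1)
    (hFderiv : ∀ v ∈ Set.Icc (0:ℝ) 1, HasDerivWithinAt F (f v) (Set.Icc (0:ℝ) 1) v)
    (hfcont : ContinuousOn f (Set.Icc (0:ℝ) 1))
    (hGmono : StrictMonoOn G (Set.Icc (0:ℝ) 1))
    (hG0 : G 0 = 0) (hG1 : G 1 = 1)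
    (hGderiv : ∀ v ∈ Set.Icc (0:ℝ) 1, HasDerivWithinAt G (g v) (Set.Icc (0:ℝ) 1) v)
    (hgcont : ContinuousOn g (Set.Icc (0:ℝ) 1))
    (kstar : ℕ) (hk1 : 1 ≤ kstar) (hkn : kstar ≤ n - 1)
    (hargmax : ∀ j ∈ Finset.Icc 1 (n-1),
      (1/(j:ℝ)) * ∫ y in (0:ℝ)..1, y * (1 - F y) *
          orderDensity (fun x => μ * F x + (1-μ) * G x)
            (fun x => μ * f x + (1-μ) * g x) (n-1) j y
        ≤ (1/(kstar:ℝ)) * ∫ y in (0:ℝ)..1, y * (1 - F y) *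
          orderDensity (fun x => μ * F x + (1-μ) * G x)
            (fun x => μ * f x + (1-μ) * g x) (n-1) kstar y) :
    ∀ w : ℕ → ℝ,
      (∀ j, 1 ≤ j → j < n → w (j+1) ≤ w j) → 0 ≤ w n →
      (∑ j ∈ Finset.Icc 1 n, w j) ≤ 1 →
      designerObj (fun x => μ * F x + (1-μ) * G x) (fun x => μ * f x + (1-μ) * g x) f n w
        ≤ designerObj (fun x => μ * F x + (1-μ) * G x) (fun x => μ * f x + (1-μ) * g x) f n
            (fun j => if j ≤ kstar then (kstar : ℝ)⁻¹ else 0) :=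
  optimal_general_contest_general n μ hμ F f G g hFmono hF0 hF1 hFderiv hfcont hGmono hG0 hG1
    hGderiv hgcont kstar hk1 hkn hargmax
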